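/- Let X = W ⊕_a Z be the absolute sum of real Banach spaces W and Z with respect to an absolute norm N which is of type 1 or of type ∞ (so W is an absolute summand of X of type 1 or ∞). If W ⊕_a Z has the BPBp-nu for compact operators, then W has the BPBp-nu for compact operators. -/

import Mathlib

open Filter Topology

/-- `N` is an absolute norm on `ℝ²`: a norm with `N(1,0)=N(0,1)=1` and
`N(s,t)=N(|s|,|t|)`. -/
structure IsAbsoluteNorm (N : ℝ → ℝ → ℝ) : Prop where
  nonneg : ∀ s t : ℝ, 0 ≤ N s t
  eq_zero_iff : ∀ s t : ℝ, N s t = 0 ↔ s = 0 ∧ t = 0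
  triangle : ∀ s₁ t₁ s₂ t₂ : ℝ, N (s₁ + s₂) (t₁ + t₂) ≤ N s₁ t₁ + N s₂ t₂
  smul : ∀ c s t : ℝ, N (c * s) (c * t) = |c| * N s t
  one_zero : N 1 0 = 1
  zero_one : N 0 1 = 1
  abs_eq : ∀ s t : ℝ, N s t = N |s| |t|

/-- An absolute norm is of type 1 if `|x| + K|y| ≤ N(x,y)` for some `K > 0`. -/
def AbsNormTypeOne (N : ℝ → ℝ → ℝ) : Prop :=
  ∃ K : ℝ, 0 < K ∧ ∀ x y : ℝ, |x| + K * |y| ≤ N x y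

/-- An absolute norm is of type ∞ if `N(1,b₀) = 1` for some `b₀ > 0`. -/
def AbsNormTypeInfty (N : ℝ → ℝ → ℝ) : Prop :=
  ∃ b₀ : ℝ, 0 < b₀ ∧ N 1 b₀ = 1

/-- The numerical radius of a bounded linear operator on `X`:
`v(T) = sup {|x*(T x)| : ‖x‖ = ‖x*‖ = 1, x*(x) = 1}`. -/
noncomputable def NumRadius {X : Type*} [NormedAddCommGroup X] [NormedSpace ℝ X]
    (T : X →L[ℝ] X) : ℝ :=
  sSup {r : ℝ | ∃ (x : X) (f : X →L[ℝ] ℝ),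
    ‖x‖ = 1 ∧ ‖f‖ = 1 ∧ f x = 1 ∧ r = |f (T x)|}

/-- `X` has the Bishop–Phelps–Bollobás property for numerical radius for compact
operators. -/
def HasBPBnuCompact (X : Type*) [NormedAddCommGroup X] [NormedSpace ℝ X] : Prop :=
  ∀ ε : ℝ, 0 < ε → ∃ η : ℝ, 0 < η ∧
    ∀ (T : X →L[ℝ] X) (x : X) (f : X →L[ℝ] ℝ), IsCompactOperator (⇑T) →
      NumRadius T = 1 → ‖x‖ = 1 → ‖f‖ = 1 → f x = 1 → 1 - η < |f (T x)| →
      ∃ (S : X →L[ℝ] X) (x₀ : X) (f₀ : X →L[ℝ] ℝ), IsCompactOperator (⇑S) ∧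
        NumRadius S = 1 ∧ ‖x₀‖ = 1 ∧ ‖f₀‖ = 1 ∧ f₀ x₀ = 1 ∧
        |f₀ (S x₀)| = 1 ∧ ‖f₀ - f‖ < ε ∧ ‖x₀ - x‖ < ε ∧ ‖S - T‖ < ε

/-!
Extend `T` to `T' = ι ∘ T ∘ P` on `X = W ⊕_N Z`. Hölder's inequality for absolute sums shows that
every state of `X` restricts to a norming pair of `W`, so `v(T') = v(T)`. The BPBp-nu of `X` gives
an operator `S` near `T'` attaining its numerical radius at a state `(u, g)` near `(ι x, f ∘ P)`,
so `u` and `g` are small on `Z`. The type of `N` turns this smallness into a norm-one retraction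
`R : X → W` with an isometric section `J` under which `(u, g)` is the image of the state
`(P u, g ∘ ι)` of `W`; the compression `R ∘ S ∘ J` is then the required operator on `W`.
-/

open Set

theorem ConvexOn.le_of_abs_le {f : ℝ → ℝ} (hf : ConvexOn ℝ univ f) (heven : ∀ x, f (-x) = f x)
    {x y : ℝ} (hxy : |x| ≤ |y|) : f x ≤ f y := by
  have hseg : x ∈ segment ℝ (-|y|) |y| := by
    rw [segment_eq_Icc (by simp)]
    exact abs_le.mp hxy
  have hy : f |y| = f y := by rcases abs_choice y with h | h <;> simp [h, heven]
  calc f x ≤ max (f (-|y|)) (f |y|) := hf.le_on_segment (mem_univ _) (mem_univ _) hseg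
    _ = f y := by rw [heven, max_self, hy]

namespace IsAbsoluteNorm

variable {N : ℝ → ℝ → ℝ}

lemma apply_zero_right (hN : IsAbsoluteNorm N) (s : ℝ) : N s 0 = |s| := by
  simpa [hN.one_zero] using hN.smul s 1 0

lemma apply_zero_left (hN : IsAbsoluteNorm N) (t : ℝ) : N 0 t = |t| := by
  simpa [hN.zero_one] using hN.smul t 0 1

lemma apply_neg_left (hN : IsAbsoluteNorm N) (s t : ℝ) : N (-s) t = N s t := by
  rw [hN.abs_eq, abs_neg, ← hN.abs_eq]

lemma apply_neg_right (hN : IsAbsoluteNorm N) (s t : ℝ) : N s (-t) = N s t := by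
  rw [hN.abs_eq, abs_neg, ← hN.abs_eq]

lemma convexOn_left (hN : IsAbsoluteNorm N) (t : ℝ) : ConvexOn ℝ univ (N · t) := by
  refine ⟨convex_univ, fun x _ y _ a b ha hb hab => ?_⟩
  calc N (a • x + b • y) t = N (a * x + b * y) (a * t + b * t) := by
        rw [← add_mul, hab, one_mul, smul_eq_mul, smul_eq_mul]
    _ ≤ N (a * x) (a * t) + N (b * y) (b * t) := hN.triangle _ _ _ _
    _ = a • N x t + b • N y t := by rw [hN.smul, hN.smul, abs_of_nonneg ha, abs_of_nonneg hb]; rfl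

lemma convexOn_right (hN : IsAbsoluteNorm N) (s : ℝ) : ConvexOn ℝ univ (N s ·) := by
  refine ⟨convex_univ, fun x _ y _ a b ha hb hab => ?_⟩
  calc N s (a • x + b • y) = N (a * s + b * s) (a * x + b * y) := by
        rw [← add_mul, hab, one_mul, smul_eq_mul, smul_eq_mul]
    _ ≤ N (a * s) (a * x) + N (b * s) (b * y) := hN.triangle _ _ _ _
    _ = a • N s x + b • N s y := by rw [hN.smul, hN.smul, abs_of_nonneg ha, abs_of_nonneg hb]; rfl

lemma mono (hN : IsAbsoluteNorm N) {s s' t t' : ℝ} (hs : |s| ≤ |s'|) (ht : |t| ≤ |t'|) :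
    N s t ≤ N s' t' :=
  calc N s t ≤ N s' t := (hN.convexOn_left t).le_of_abs_le (hN.apply_neg_left · t) hs
    _ ≤ N s' t' := (hN.convexOn_right s').le_of_abs_le (hN.apply_neg_right s') ht

lemma apply_eq_of_abs_le (hN : IsAbsoluteNorm N) {b s t : ℝ} (hb : N 1 b = 1) (hs : 0 ≤ s)
    (ht : |t| ≤ b * s) : N s t = s := by
  refine le_antisymm ?_ ?_
  · have hbs : |t| ≤ |s * b| := by rwa [mul_comm, abs_of_nonneg ((abs_nonneg t).trans ht)]
    calc N s t ≤ N s (s * b) := hN.mono le_rfl hbs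
      _ = s := by rw [← mul_one s, mul_assoc, one_mul, hN.smul, hb, abs_of_nonneg hs]
  · calc s = N s 0 := by rw [hN.apply_zero_right, abs_of_nonneg hs]
      _ ≤ N s t := hN.mono le_rfl (by simp)

end IsAbsoluteNorm

section NumRadius

variable {Y : Type*} [NormedAddCommGroup Y] [NormedSpace ℝ Y]

lemma ContinuousLinearMap.exists_norm_le_one_lt_apply (f : Y →L[ℝ] ℝ) {r : ℝ} (hr : r < ‖f‖) :
    ∃ y : Y, ‖y‖ ≤ 1 ∧ r < f y := by
  obtain ⟨y, hy, hry⟩ := f.exists_lt_apply_of_lt_opNorm hr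
  rw [Real.norm_eq_abs] at hry
  rcases abs_choice (f y) with h | h
  · exact ⟨y, hy.le, h ▸ hry⟩
  · exact ⟨-y, by rw [norm_neg]; exact hy.le, by rw [map_neg, ← h]; exact hry⟩

lemma ContinuousLinearMap.norm_eq_one_of_apply_eq_one {f : Y →L[ℝ] ℝ} {y : Y} (hf : ‖f‖ ≤ 1)
    (hy : ‖y‖ = 1) (hfy : f y = 1) : ‖f‖ = 1 := by
  refine le_antisymm hf ?_
  simpa [hfy, hy] using f.le_opNorm y

lemma bddAbove_numRadius_set (T : Y →L[ℝ] Y) :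
    BddAbove {r : ℝ | ∃ (x : Y) (f : Y →L[ℝ] ℝ), ‖x‖ = 1 ∧ ‖f‖ = 1 ∧ f x = 1 ∧ r = |f (T x)|} := by
  refine ⟨‖T‖, ?_⟩
  rintro r ⟨x, f, hx, hf, -, rfl⟩
  simpa [hf, hx, ← Real.norm_eq_abs] using f.le_opNorm_of_le (T.le_opNorm_of_le hx.le)

lemma abs_apply_le_numRadius (T : Y →L[ℝ] Y) {x : Y} {f : Y →L[ℝ] ℝ}
    (hx : ‖x‖ = 1) (hf : ‖f‖ = 1) (hfx : f x = 1) : |f (T x)| ≤ NumRadius T :=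
  le_csSup (bddAbove_numRadius_set T) ⟨x, f, hx, hf, hfx, rfl⟩

lemma numRadius_le {T : Y →L[ℝ] Y} {c : ℝ} (hc : 0 ≤ c)
    (H : ∀ (x : Y) (f : Y →L[ℝ] ℝ), ‖x‖ = 1 → ‖f‖ = 1 → f x = 1 → |f (T x)| ≤ c) :
    NumRadius T ≤ c :=
  Real.sSup_le (by rintro r ⟨x, f, hx, hf, hfx, rfl⟩; exact H x f hx hf hfx) hc

lemma numRadius_nonneg (T : Y →L[ℝ] Y) : 0 ≤ NumRadius T :=
  Real.sSup_nonneg (by rintro r ⟨x, f, -, -, -, rfl⟩; exact abs_nonneg _)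

lemma abs_apply_le_numRadius_mul (T : Y →L[ℝ] Y) {x : Y} {f : Y →L[ℝ] ℝ}
    (hfx : f x = ‖f‖ * ‖x‖) : |f (T x)| ≤ NumRadius T * (‖f‖ * ‖x‖) := by
  rcases eq_or_ne x 0 with rfl | hx
  · simp
  rcases eq_or_ne f 0 with rfl | hf
  · simp
  have hx' : ‖x‖ ≠ 0 := norm_ne_zero_iff.mpr hx
  have hf' : ‖f‖ ≠ 0 := norm_ne_zero_iff.mpr hf
  have hx1 : ‖‖x‖⁻¹ • x‖ = 1 := by rw [norm_smul, norm_inv, norm_norm, inv_mul_cancel₀ hx']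
  have hf1 : ‖‖f‖⁻¹ • f‖ = 1 := by rw [norm_smul, norm_inv, norm_norm, inv_mul_cancel₀ hf']
  have key := abs_apply_le_numRadius T hx1 hf1 (by
    simp only [map_smul, smul_apply, smul_eq_mul, hfx]; field_simp)
  have hval : (‖f‖⁻¹ • f) (T (‖x‖⁻¹ • x)) = (‖f‖ * ‖x‖)⁻¹ * f (T x) := by
    simp only [map_smul, smul_apply, smul_eq_mul, mul_inv]; ring
  rw [hval, abs_mul, abs_inv, abs_of_pos (by positivity), inv_mul_le_iff₀ (by positivity)] at key
  linarith

end NumRadius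

section Retract

variable {V Y : Type*} [NormedAddCommGroup V] [NormedSpace ℝ V]
  [NormedAddCommGroup Y] [NormedSpace ℝ Y]

structure IsIsometricRetract (J : V →L[ℝ] Y) (R : Y →L[ℝ] V) : Prop where
  left_inv : ∀ v, R (J v) = v
  norm_map : ∀ v, ‖J v‖ = ‖v‖
  norm_le_one : ‖R‖ ≤ 1

namespace IsIsometricRetract

variable {J : V →L[ℝ] Y} {R : Y →L[ℝ] V}

lemma norm_apply_le (h : IsIsometricRetract J R) (y : Y) : ‖R y‖ ≤ ‖y‖ :=
  R.le_of_opNorm_le h.norm_le_one y |>.trans_eq (one_mul _)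

lemma norm_comp_le {F : Type*} [NormedAddCommGroup F] [NormedSpace ℝ F]
    (h : IsIsometricRetract J R) (φ : Y →L[ℝ] F) : ‖φ ∘L J‖ ≤ ‖φ‖ :=
  (φ ∘L J).opNorm_le_bound (norm_nonneg φ) fun v => h.norm_map v ▸ φ.le_opNorm (J v)

lemma norm_comp_eq_one (h : IsIsometricRetract J R) {v : V} {φ : V →L[ℝ] ℝ}
    (hv : ‖v‖ = 1) (hφ : ‖φ‖ = 1) (hφv : φ v = 1) : ‖φ ∘L R‖ = 1 :=
  ContinuousLinearMap.norm_eq_one_of_apply_eq_one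
    ((φ.opNorm_comp_le R).trans (by simpa [hφ] using h.norm_le_one))
    (h.norm_map v ▸ hv) (by simp [h.left_inv, hφv])

lemma numRadius_compress_le (h : IsIsometricRetract J R) (S : Y →L[ℝ] Y) :
    NumRadius (R ∘L S ∘L J) ≤ NumRadius S := by
  refine numRadius_le (numRadius_nonneg S) fun v φ hv hφ hφv => ?_
  simpa using abs_apply_le_numRadius S (h.norm_map v ▸ hv) (h.norm_comp_eq_one hv hφ hφv)
    (by simp [h.left_inv, hφv])

lemma norm_compress_sub_le (h : IsIsometricRetract J R) (S S' : Y →L[ℝ] Y) :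
    ‖R ∘L S ∘L J - R ∘L S' ∘L J‖ ≤ ‖S - S'‖ := by
  refine ContinuousLinearMap.opNorm_le_bound _ (norm_nonneg _) fun v => ?_
  calc ‖(R ∘L S ∘L J - R ∘L S' ∘L J) v‖ = ‖R ((S - S') (J v))‖ := by simp
    _ ≤ ‖S - S'‖ * ‖v‖ := (h.norm_apply_le _).trans (h.norm_map v ▸ (S - S').le_opNorm (J v))

lemma norm_apply_sub_le (h : IsIsometricRetract J R) (y : Y) (v : V) :
    ‖R y - v‖ ≤ ‖y - J v‖ := by
  simpa [h.left_inv] using h.norm_apply_le (y - J v)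

lemma norm_comp_sub_le (h : IsIsometricRetract J R) (g : Y →L[ℝ] ℝ) (f : V →L[ℝ] ℝ) :
    ‖g ∘L J - f‖ ≤ ‖g - f ∘L R‖ := by
  have hcomp : g ∘L J - f = (g - f ∘L R) ∘L J := by ext; simp [h.left_inv]
  exact hcomp ▸ h.norm_comp_le _

lemma compress_attains (h : IsIsometricRetract J R) {S : Y →L[ℝ] Y} (hS : NumRadius S = 1)
    {u : Y} {g : Y →L[ℝ] ℝ} {v : V} {ψ : V →L[ℝ] ℝ} (hu : ‖u‖ = 1) (hgu : g u = 1)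
    (hatt : |g (S u)| = 1) (hv : J v = u) (hψ : ψ ∘L R = g) (hψ1 : ‖ψ‖ ≤ 1) :
    NumRadius (R ∘L S ∘L J) = 1 ∧ ‖v‖ = 1 ∧ ‖ψ‖ = 1 ∧ ψ v = 1 ∧
      |ψ ((R ∘L S ∘L J) v)| = 1 := by
  have hv1 : ‖v‖ = 1 := by rw [← h.norm_map, hv, hu]
  have hψv : ψ v = 1 := by rw [← hgu, ← hv, ← hψ]; simp [h.left_inv]
  have hψ' : ‖ψ‖ = 1 := ContinuousLinearMap.norm_eq_one_of_apply_eq_one hψ1 hv1 hψv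
  have hval : |ψ ((R ∘L S ∘L J) v)| = 1 := by rw [← hatt, ← hv, ← hψ]; simp
  refine ⟨le_antisymm ?_ ?_, hv1, hψ', hψv, hval⟩
  · exact hS ▸ h.numRadius_compress_le S
  · exact hval ▸ abs_apply_le_numRadius _ hv1 hψ' hψv

end IsIsometricRetract

end Retract

section AbsoluteSum

variable {W Z X : Type*} [NormedAddCommGroup W] [NormedSpace ℝ W]
  [NormedAddCommGroup Z] [NormedSpace ℝ Z] [NormedAddCommGroup X] [NormedSpace ℝ X]

variable (e : X ≃L[ℝ] W × Z)

def sumFst : X →L[ℝ] W := ContinuousLinearMap.fst ℝ W Z ∘L (e : X →L[ℝ] W × Z)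

def sumSnd : X →L[ℝ] Z := ContinuousLinearMap.snd ℝ W Z ∘L (e : X →L[ℝ] W × Z)

def sumInl : W →L[ℝ] X := (e.symm : W × Z →L[ℝ] X) ∘L ContinuousLinearMap.inl ℝ W Z

def sumInr : Z →L[ℝ] X := (e.symm : W × Z →L[ℝ] X) ∘L ContinuousLinearMap.inr ℝ W Z

@[simp] lemma sumFst_sumInl (w : W) : sumFst e (sumInl e w) = w := by simp [sumFst, sumInl]

@[simp] lemma sumSnd_sumInl (w : W) : sumSnd e (sumInl e w) = 0 := by simp [sumSnd, sumInl]

@[simp] lemma sumFst_sumInr (z : Z) : sumFst e (sumInr e z) = 0 := by simp [sumFst, sumInr]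

@[simp] lemma sumSnd_sumInr (z : Z) : sumSnd e (sumInr e z) = z := by simp [sumSnd, sumInr]

lemma sumInl_add_sumInr (x : X) : sumInl e (sumFst e x) + sumInr e (sumSnd e x) = x := by
  apply e.injective
  simp [sumFst, sumSnd, sumInl, sumInr]

lemma apply_eq_add (φ : X →L[ℝ] ℝ) (x : X) :
    φ x = (φ ∘L sumInl e) (sumFst e x) + (φ ∘L sumInr e) (sumSnd e x) := by
  conv_lhs => rw [← sumInl_add_sumInr e x]
  simp

lemma apply_le_add (φ : X →L[ℝ] ℝ) (x : X) :
    φ x ≤ ‖φ ∘L sumInl e‖ * ‖sumFst e x‖ + ‖φ ∘L sumInr e‖ * ‖sumSnd e x‖ := by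
  rw [apply_eq_add e φ x]
  exact add_le_add ((le_abs_self _).trans ((φ ∘L sumInl e).le_opNorm _))
    ((le_abs_self _).trans ((φ ∘L sumInr e).le_opNorm _))

variable {e}

structure IsAbsoluteSum (N : ℝ → ℝ → ℝ) (e : X ≃L[ℝ] W × Z) : Prop where
  absoluteNorm : IsAbsoluteNorm N
  norm_eq : ∀ x, ‖x‖ = N ‖sumFst e x‖ ‖sumSnd e x‖

namespace IsAbsoluteSum

variable {N : ℝ → ℝ → ℝ}

lemma norm_sumInl_add_sumInr (hs : IsAbsoluteSum N e) (w : W) (z : Z) :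
    ‖sumInl e w + sumInr e z‖ = N ‖w‖ ‖z‖ := by
  simp [hs.norm_eq]

lemma norm_sumInl (hs : IsAbsoluteSum N e) (w : W) : ‖sumInl e w‖ = ‖w‖ := by
  simpa [hs.absoluteNorm.apply_zero_right] using hs.norm_sumInl_add_sumInr w 0

lemma norm_sumInr (hs : IsAbsoluteSum N e) (z : Z) : ‖sumInr e z‖ = ‖z‖ := by
  simpa [hs.absoluteNorm.apply_zero_left] using hs.norm_sumInl_add_sumInr 0 z

lemma norm_sumFst_le (hs : IsAbsoluteSum N e) (x : X) : ‖sumFst e x‖ ≤ ‖x‖ := by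
  calc ‖sumFst e x‖ = N ‖sumFst e x‖ 0 := by rw [hs.absoluteNorm.apply_zero_right, abs_norm]
    _ ≤ ‖x‖ := hs.norm_eq x ▸ hs.absoluteNorm.mono le_rfl (by simp)

lemma norm_sumSnd_le (hs : IsAbsoluteSum N e) (x : X) : ‖sumSnd e x‖ ≤ ‖x‖ := by
  calc ‖sumSnd e x‖ = N 0 ‖sumSnd e x‖ := by rw [hs.absoluteNorm.apply_zero_left, abs_norm]
    _ ≤ ‖x‖ := hs.norm_eq x ▸ hs.absoluteNorm.mono (by simp) le_rfl

lemma isIsometricRetract_inl (hs : IsAbsoluteSum N e) :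
    IsIsometricRetract (sumInl e) (sumFst e) where
  left_inv := sumFst_sumInl e
  norm_map := hs.norm_sumInl
  norm_le_one := (sumFst e).opNorm_le_bound zero_le_one fun x => by
    simpa using hs.norm_sumFst_le x

lemma isIsometricRetract_inr (hs : IsAbsoluteSum N e) :
    IsIsometricRetract (sumInr e) (sumSnd e) where
  left_inv := sumSnd_sumInr e
  norm_map := hs.norm_sumInr
  norm_le_one := (sumSnd e).opNorm_le_bound zero_le_one fun x => by
    simpa using hs.norm_sumSnd_le x

/-- Hölder's inequality for the dual of an absolute sum. -/
lemma norm_comp_sumInl_mul_add_le (hs : IsAbsoluteSum N e) (g : X →L[ℝ] ℝ) {a b : ℝ}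
    (ha : 0 ≤ a) (hb : 0 ≤ b) :
    ‖g ∘L sumInl e‖ * a + ‖g ∘L sumInr e‖ * b ≤ ‖g‖ * N a b := by
  refine le_of_forall_pos_le_add fun ε hε => ?_
  set δ := ε / (a + b + 1)
  have hδ : 0 < δ := by positivity
  obtain ⟨w, hw, hgw⟩ := (g ∘L sumInl e).exists_norm_le_one_lt_apply (sub_lt_self _ hδ)
  obtain ⟨z, hz, hgz⟩ := (g ∘L sumInr e).exists_norm_le_one_lt_apply (sub_lt_self _ hδ)
  have key : (g ∘L sumInl e) w * a + (g ∘L sumInr e) z * b ≤ ‖g‖ * N a b :=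
    calc (g ∘L sumInl e) w * a + (g ∘L sumInr e) z * b
        = g (sumInl e (a • w) + sumInr e (b • z)) := by simp [mul_comm]
      _ ≤ ‖g‖ * ‖sumInl e (a • w) + sumInr e (b • z)‖ := (le_abs_self _).trans (g.le_opNorm _)
      _ ≤ ‖g‖ * N a b := by
        rw [hs.norm_sumInl_add_sumInr, norm_smul, norm_smul, Real.norm_of_nonneg ha,
          Real.norm_of_nonneg hb]
        gcongr
        exact hs.absoluteNorm.mono
          (abs_le_abs_of_nonneg (by positivity) (mul_le_of_le_one_right ha hw))
          (abs_le_abs_of_nonneg (by positivity) (mul_le_of_le_one_right hb hz))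
  have hδab : δ * (a + b) ≤ ε := by
    rw [div_mul_eq_mul_div, div_le_iff₀ (by positivity)]
    nlinarith
  nlinarith

lemma comp_sumInl_apply_sumFst (hs : IsAbsoluteSum N e) {g : X →L[ℝ] ℝ} {x : X}
    (hgx : g x = ‖g‖ * ‖x‖) :
    (g ∘L sumInl e) (sumFst e x) = ‖g ∘L sumInl e‖ * ‖sumFst e x‖ := by
  have holder := hs.norm_comp_sumInl_mul_add_le g (norm_nonneg (sumFst e x))
    (norm_nonneg (sumSnd e x))
  rw [← hs.norm_eq, ← hgx, apply_eq_add e g x] at holder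
  have h₁ := le_abs_self ((g ∘L sumInl e) (sumFst e x)) |>.trans ((g ∘L sumInl e).le_opNorm _)
  have h₂ := le_abs_self ((g ∘L sumInr e) (sumSnd e x)) |>.trans ((g ∘L sumInr e).le_opNorm _)
  linarith

lemma numRadius_sumInl_comp_comp_sumFst (hs : IsAbsoluteSum N e) (T : W →L[ℝ] W) :
    NumRadius (sumInl e ∘L T ∘L sumFst e) = NumRadius T := by
  refine le_antisymm (numRadius_le (numRadius_nonneg T) fun x g hx hg hgx => ?_) ?_
  · have hstate := hs.comp_sumInl_apply_sumFst (g := g) (x := x) (by rw [hgx, hg, hx, one_mul])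
    have hnorm : ‖g ∘L sumInl e‖ * ‖sumFst e x‖ ≤ 1 :=
      mul_le_one₀ (hg ▸ hs.isIsometricRetract_inl.norm_comp_le g) (norm_nonneg _)
        (hx ▸ hs.norm_sumFst_le x)
    calc |g ((sumInl e ∘L T ∘L sumFst e) x)| = |(g ∘L sumInl e) (T (sumFst e x))| := rfl
      _ ≤ NumRadius T * (‖g ∘L sumInl e‖ * ‖sumFst e x‖) := abs_apply_le_numRadius_mul T hstate
      _ ≤ NumRadius T := mul_le_of_le_one_right (numRadius_nonneg T) hnorm
  · have hT : sumFst e ∘L (sumInl e ∘L T ∘L sumFst e) ∘L sumInl e = T := by ext; simp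
    simpa only [hT] using
      hs.isIsometricRetract_inl.numRadius_compress_le (sumInl e ∘L T ∘L sumFst e)

lemma abs_apply_sumInl_le (hs : IsAbsoluteSum N e) {g : X →L[ℝ] ℝ} (hg : ‖g‖ = 1) (w : W) :
    |g (sumInl e w)| ≤ ‖w‖ :=
  (g ∘L sumInl e).le_opNorm w |>.trans
    (mul_le_of_le_one_left (norm_nonneg w) (hg ▸ hs.isIsometricRetract_inl.norm_comp_le g))

lemma norm_sumSnd_le_norm_sub (hs : IsAbsoluteSum N e) (x : X) (w : W) :
    ‖sumSnd e x‖ ≤ ‖x - sumInl e w‖ := by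
  simpa using hs.norm_sumSnd_le (x - sumInl e w)

lemma norm_comp_sumInr_le_norm_sub (hs : IsAbsoluteSum N e) (g : X →L[ℝ] ℝ) (f : W →L[ℝ] ℝ) :
    ‖g ∘L sumInr e‖ ≤ ‖g - f ∘L sumFst e‖ := by
  have hcomp : g ∘L sumInr e = (g - f ∘L sumFst e) ∘L sumInr e := by ext; simp
  exact hcomp ▸ hs.isIsometricRetract_inr.norm_comp_le _

end IsAbsoluteSum

/-- A norm-one retraction of `X` onto a copy of `W`, compatible with the summand `W`, along which
the state `(u, g)` of `X` descends to the state `(sumFst e u, g ∘L sumInl e)` of `W`. -/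
structure IsStateRetract (e : X ≃L[ℝ] W × Z) (u : X) (g : X →L[ℝ] ℝ) (J : W →L[ℝ] X)
    (R : X →L[ℝ] W) : Prop extends IsIsometricRetract J R where
  apply_sumInl : ∀ w, R (sumInl e w) = w
  sumFst_apply : ∀ w, sumFst e (J w) = w
  apply_sumFst : J (sumFst e u) = u
  comp_sumInl_comp : (g ∘L sumInl e) ∘L R = g

namespace IsAbsoluteSum

variable {N : ℝ → ℝ → ℝ}

/-- For a norm of type `1`, a state close to `W` lies in `W`; `R` corrects `sumFst e` by the part
of `g` living on `Z`. -/
lemma exists_isStateRetract_of_typeOne (hs : IsAbsoluteSum N e) {K : ℝ}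
    (hK : ∀ s t : ℝ, |s| + K * |t| ≤ N s t) {u : X} {g : X →L[ℝ] ℝ} (hu : ‖u‖ = 1)
    (hg : ‖g‖ = 1) (hgu : g u = 1) (hgK : ‖g ∘L sumInr e‖ < K) :
    ∃ J R, IsStateRetract e u g J R := by
  have hKsum : ∀ x, ‖sumFst e x‖ + K * ‖sumSnd e x‖ ≤ ‖x‖ := fun x => by
    simpa [← hs.norm_eq] using hK ‖sumFst e x‖ ‖sumSnd e x‖
  have hgι : ‖g ∘L sumInl e‖ ≤ 1 := hg ▸ hs.isIsometricRetract_inl.norm_comp_le g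
  have hQu : sumSnd e u = 0 := by
    have hgu' := hgu ▸ apply_le_add e g u
    have hKu := hu ▸ hKsum u
    have hgap : (K - ‖g ∘L sumInr e‖) * ‖sumSnd e u‖ ≤ 0 := by
      nlinarith [norm_nonneg (sumFst e u)]
    exact norm_le_zero_iff.mp (nonpos_of_mul_nonpos_right hgap (sub_pos.mpr hgK))
  have hu' : sumInl e (sumFst e u) = u := by simpa [hQu] using sumInl_add_sumInr e u
  have hPu : ‖sumFst e u‖ ≤ 1 := hu ▸ hs.norm_sumFst_le u
  set R := sumFst e + (g ∘L sumInr e ∘L sumSnd e).smulRight (sumFst e u)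
  have hR : ∀ x, R x = sumFst e x + g (sumInr e (sumSnd e x)) • sumFst e u := fun x => rfl
  have hRnorm : ∀ x, ‖R x‖ ≤ ‖x‖ := fun x =>
    calc ‖R x‖ ≤ ‖sumFst e x‖ + |g (sumInr e (sumSnd e x))| * ‖sumFst e u‖ := by
          rw [hR, ← Real.norm_eq_abs, ← norm_smul]; exact norm_add_le _ _
      _ ≤ ‖sumFst e x‖ + K * ‖sumSnd e x‖ := by
          have hZ : |g (sumInr e (sumSnd e x))| ≤ K * ‖sumSnd e x‖ :=
            ((g ∘L sumInr e).le_opNorm _).trans (by gcongr)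
          nlinarith [abs_nonneg (g (sumInr e (sumSnd e x))), norm_nonneg (sumFst e u)]
      _ ≤ ‖x‖ := hKsum x
  refine ⟨sumInl e, R, ⟨⟨fun w => by simp [hR], hs.norm_sumInl,
    R.opNorm_le_bound zero_le_one fun x => (one_mul ‖x‖).symm ▸ hRnorm x⟩,
    fun w => by simp [hR], sumFst_sumInl e, hu', ?_⟩⟩
  ext x
  simp [hR, hu', hgu, apply_eq_add e g x]

/-- For a norm of type `∞`, the functional of a state close to `W` vanishes on `Z`; `J` tilts `W`
towards `sumSnd e u` inside the flat face of the unit sphere at `(1, 0)`. -/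
lemma exists_isStateRetract_of_typeInfty (hs : IsAbsoluteSum N e) {b : ℝ} (hb : N 1 b = 1)
    {u : X} {g : X →L[ℝ] ℝ} (hu : ‖u‖ = 1) (hg : ‖g‖ = 1) (hgu : g u = 1)
    (hQu : ‖sumSnd e u‖ < b) :
    ∃ J R, IsStateRetract e u g J R := by
  have hgZ : g ∘L sumInr e = 0 := by
    have hdual := hs.norm_comp_sumInl_mul_add_le g zero_le_one
      ((norm_nonneg (sumSnd e u)).trans hQu.le)
    rw [hg, hb, mul_one, one_mul] at hdual
    have hgu' := hgu ▸ apply_le_add e g u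
    have hPu : ‖sumFst e u‖ ≤ 1 := hu ▸ hs.norm_sumFst_le u
    have hgap : ‖g ∘L sumInr e‖ * (b - ‖sumSnd e u‖) ≤ 0 := by
      nlinarith [norm_nonneg (g ∘L sumInl e)]
    exact norm_le_zero_iff.mp (nonpos_of_mul_nonpos_left hgap (sub_pos.mpr hQu))
  have hgP : ∀ x, g (sumInl e (sumFst e x)) = g x := fun x => by
    simpa [hgZ] using (apply_eq_add e g x).symm
  set J := sumInl e + (g ∘L sumInl e).smulRight (sumInr e (sumSnd e u))
  have hJ : ∀ w, J w = sumInl e w + sumInr e (g (sumInl e w) • sumSnd e u) := fun w => by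
    simp [J]
  have hJnorm : ∀ w, ‖J w‖ = ‖w‖ := fun w => by
    rw [hJ, hs.norm_sumInl_add_sumInr, norm_smul, Real.norm_eq_abs]
    refine hs.absoluteNorm.apply_eq_of_abs_le hb (norm_nonneg w) ?_
    rw [abs_of_nonneg (by positivity), mul_comm b]
    exact mul_le_mul (hs.abs_apply_sumInl_le hg w) hQu.le (norm_nonneg _) (norm_nonneg w)
  refine ⟨J, sumFst e, ⟨⟨fun w => by simp [hJ], hJnorm, hs.isIsometricRetract_inl.norm_le_one⟩,
    sumFst_sumInl e, fun w => by simp [hJ], ?_, ?_⟩⟩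
  · rw [hJ, hgP, hgu, one_smul, sumInl_add_sumInr]
  · ext x
    simp [hgP]

lemma exists_isStateRetract (hs : IsAbsoluteSum N e)
    (htype : AbsNormTypeOne N ∨ AbsNormTypeInfty N) :
    ∃ δ > 0, ∀ (u : X) (g : X →L[ℝ] ℝ), ‖u‖ = 1 → ‖g‖ = 1 → g u = 1 →
      ‖sumSnd e u‖ < δ → ‖g ∘L sumInr e‖ < δ → ∃ J R, IsStateRetract e u g J R := by
  rcases htype with ⟨K, hK, hKN⟩ | ⟨b, hb, hbN⟩
  · exact ⟨K, hK, fun u g hu hg hgu _ hgK =>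
      hs.exists_isStateRetract_of_typeOne hKN hu hg hgu hgK⟩
  · exact ⟨b, hb, fun u g hu hg hgu hQu _ =>
      hs.exists_isStateRetract_of_typeInfty hbN hu hg hgu hQu⟩

end IsAbsoluteSum

end AbsoluteSum

theorem bpbnu_compact_absolute_summand_general (W Z X : Type*)
    [NormedAddCommGroup W] [NormedSpace ℝ W]
    [NormedAddCommGroup Z] [NormedSpace ℝ Z]
    [NormedAddCommGroup X] [NormedSpace ℝ X]
    (N : ℝ → ℝ → ℝ) (hN : IsAbsoluteNorm N)
    (e : X ≃L[ℝ] W × Z) (he : ∀ x : X, ‖x‖ = N ‖(e x).1‖ ‖(e x).2‖)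
    (htype : AbsNormTypeOne N ∨ AbsNormTypeInfty N)
    (h : HasBPBnuCompact X) : HasBPBnuCompact W := by
  have hs : IsAbsoluteSum N e := ⟨hN, he⟩
  have hinl := hs.isIsometricRetract_inl
  obtain ⟨δ, hδ, hretract⟩ := hs.exists_isStateRetract htype
  intro ε hε
  obtain ⟨η, hη, hX⟩ := h (min ε δ) (lt_min hε hδ)
  refine ⟨η, hη, fun T x f hT hvT hx hf hfx hTx => ?_⟩
  set T' := sumInl e ∘L T ∘L sumFst e
  obtain ⟨S, u, g, hS, hvS, hu, hg, hgu, hatt, hgf, hux, hST⟩ :=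
    hX T' (sumInl e x) (f ∘L sumFst e) ((hT.comp_clm (sumFst e)).clm_comp (sumInl e))
      (hs.numRadius_sumInl_comp_comp_sumFst T ▸ hvT) (hx ▸ hs.norm_sumInl x)
      (hinl.norm_comp_eq_one hx hf hfx) (by simp [hfx]) (by simpa [T'] using hTx)
  obtain ⟨J, R, hJR⟩ := hretract u g hu hg hgu
    ((hs.norm_sumSnd_le_norm_sub u x).trans_lt (hux.trans_le (min_le_right _ _)))
    ((hs.norm_comp_sumInr_le_norm_sub g f).trans_lt (hgf.trans_le (min_le_right _ _)))
  obtain ⟨hvS₀, hPu, hgι, hgιPu, hatt₀⟩ := hJR.compress_attains hvS hu hgu hatt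
    hJR.apply_sumFst hJR.comp_sumInl_comp (hg ▸ hinl.norm_comp_le g)
  have hT' : R ∘L T' ∘L J = T := by ext; simp [T', hJR.apply_sumInl, hJR.sumFst_apply]
  refine ⟨R ∘L S ∘L J, sumFst e u, g ∘L sumInl e, (hS.comp_clm J).clm_comp R, hvS₀, hPu, hgι,
    hgιPu, hatt₀, ?_, ?_, ?_⟩
  · exact (hinl.norm_comp_sub_le g f).trans_lt (hgf.trans_le (min_le_left _ _))
  · exact (hinl.norm_apply_sub_le u x).trans_lt (hux.trans_le (min_le_left _ _))
  · exact hT' ▸ (hJR.norm_compress_sub_le S T').trans_lt (hST.trans_le (min_le_left _ _))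

theorem bpbnu_compact_absolute_summand (W Z X : Type*)
    [NormedAddCommGroup W] [NormedSpace ℝ W] [CompleteSpace W]
    [NormedAddCommGroup Z] [NormedSpace ℝ Z] [CompleteSpace Z]
    [NormedAddCommGroup X] [NormedSpace ℝ X] [CompleteSpace X]
    (N : ℝ → ℝ → ℝ) (hN : IsAbsoluteNorm N)
    (e : X ≃L[ℝ] W × Z) (he : ∀ x : X, ‖x‖ = N ‖(e x).1‖ ‖(e x).2‖)
    (htype : AbsNormTypeOne N ∨ AbsNormTypeInfty N)
    (h : HasBPBnuCompact X) : HasBPBnuCompact W :=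
  bpbnu_compact_absolute_summand_general W Z X N hN e he htype h
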